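/- Let A be a nonzero n×n real symmetric positive semidefinite matrix and M an arbitrary n×n real matrix. Then ‖I − MA‖_A ≤ 1 if and only if A^{1/2} M̄ A^{1/2} is positive semidefinite, where M̄ = M + Mᵀ − MᵀAM. -/

import Mathlib

open Matrix

/-- Euclidean norm of a vector in `ℝⁿ`. -/
noncomputable def enorm {n : ℕ} (v : Fin n → ℝ) : ℝ := Real.sqrt (v ⬝ᵥ v)

/-- The `A`-seminorm `‖v‖_A = sqrt (vᵀ A v)` of a vector. -/
noncomputable def vnorm {n : ℕ} (A : Matrix (Fin n) (Fin n) ℝ) (v : Fin n → ℝ) : ℝ :=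
  Real.sqrt (v ⬝ᵥ A.mulVec v)

/-- The `A`-seminorm of a matrix: sup over `v ∉ N(A)` of `‖Xv‖_A / ‖v‖_A`. -/
noncomputable def matNorm {n : ℕ} (A X : Matrix (Fin n) (Fin n) ℝ) : ℝ :=
  sSup ((fun v => vnorm A (X.mulVec v) / vnorm A v) '' {v | A.mulVec v ≠ 0})

/-- Penrose conditions: `X` is the Moore–Penrose inverse of `S`. -/
def IsMP {m : ℕ} (S X : Matrix (Fin m) (Fin m) ℝ) : Prop :=
  S * X * S = S ∧ X * S * X = X ∧ (S * X)ᵀ = S * X ∧ (X * S)ᵀ = X * S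

/-- `eigk S k` is the `k`-th smallest eigenvalue (1-indexed, counted with
multiplicity) of a symmetric matrix `S` (junk value otherwise). -/
noncomputable def eigk {m : ℕ} (S : Matrix (Fin m) (Fin m) ℝ) (k : ℕ) : ℝ :=
  if hS : S.IsHermitian then
    if h : k - 1 < m then hS.eigenvalues (Tuple.sort hS.eigenvalues ⟨k - 1, h⟩) else 0
  else 0

/-- The positive semidefinite square root of a positive semidefinite matrix
(the definition `Matrix.PosSemidef.sqrt` of the older Mathlib, removed since). -/
noncomputable def Matrix.PosSemidef.sqrt {n : ℕ} {A : Matrix (Fin n) (Fin n) ℝ}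
    (hA : A.PosSemidef) : Matrix (Fin n) (Fin n) ℝ :=
  hA.1.eigenvectorUnitary.1 * diagonal ((↑) ∘ (√·) ∘ hA.1.eigenvalues) *
  (star hA.1.eigenvectorUnitary : Matrix (Fin n) (Fin n) ℝ)

/-!
With `S = A^{1/2}` one has `‖v‖_A = ‖S v‖`, and expanding the square gives
`‖(I - M A) v‖_A² = ‖v‖_A² - (A v)ᵀ M̄ (A v)`. So `‖I - M A‖_A ≤ 1` says exactly that the quadratic
form of `M̄` is nonnegative on the range of `A`, while `S M̄ S ⪰ 0` says that it is nonnegative on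
the range of `S`; these ranges coincide because `A = Sᵀ S` has the same rank as `S`.
-/

lemma Matrix.mulVec_dotProduct_mulVec {ι R : Type*} [Fintype ι] [CommSemiring R]
    (X Y : Matrix ι ι R) (v : ι → R) :
    (X *ᵥ v) ⬝ᵥ Y *ᵥ (X *ᵥ v) = v ⬝ᵥ (Xᵀ * Y * X) *ᵥ v := by
  rw [← mulVec_mulVec, ← mulVec_mulVec, dotProduct_mulVec v, vecMul_transpose]

lemma Matrix.dotProduct_mulVec_one_sub_mul_mulVec {ι R : Type*} [Fintype ι] [DecidableEq ι]
    [CommRing R] {A : Matrix ι ι R} (hA : Aᵀ = A) (M : Matrix ι ι R) (v : ι → R) :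
    ((1 - M * A) *ᵥ v) ⬝ᵥ A *ᵥ ((1 - M * A) *ᵥ v) =
      v ⬝ᵥ A *ᵥ v - (A *ᵥ v) ⬝ᵥ (M + Mᵀ - Mᵀ * A * M) *ᵥ (A *ᵥ v) := by
  rw [mulVec_dotProduct_mulVec, mulVec_dotProduct_mulVec, ← dotProduct_sub, ← sub_mulVec]
  congr 2
  simp only [transpose_sub, transpose_one, transpose_mul, hA]
  noncomm_ring

section

variable {n : ℕ} {A : Matrix (Fin n) (Fin n) ℝ}

/-- `hX` keeps the set bounded above; otherwise `sSup` would be the junk value `0`. -/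
lemma matNorm_le_one_iff {X : Matrix (Fin n) (Fin n) ℝ}
    (hX : ∃ C, ∀ v, vnorm A (X *ᵥ v) ≤ C * vnorm A v) :
    matNorm A X ≤ 1 ↔ ∀ v, vnorm A (X *ᵥ v) ≤ vnorm A v := by
  obtain ⟨C, hC⟩ := hX
  constructor
  · intro h v
    rcases (show 0 ≤ vnorm A v from Real.sqrt_nonneg _).eq_or_lt with h0 | hpos
    · simpa only [← h0, mul_zero] using hC v
    have hAv : A *ᵥ v ≠ 0 := fun h' => hpos.ne' (by simp [vnorm, h'])
    have hbdd : BddAbove ((fun v => vnorm A (X *ᵥ v) / vnorm A v) '' {v | A *ᵥ v ≠ 0}) := by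
      refine ⟨max C 0, ?_⟩
      rintro _ ⟨w, -, rfl⟩
      exact div_le_of_le_mul₀ (Real.sqrt_nonneg _) (le_max_right _ _)
        ((hC w).trans (mul_le_mul_of_nonneg_right (le_max_left _ _) (Real.sqrt_nonneg _)))
    rw [← div_le_one hpos]
    exact (le_csSup hbdd ⟨v, hAv, rfl⟩).trans h
  · intro h
    refine Real.sSup_le ?_ zero_le_one
    rintro _ ⟨v, -, rfl⟩
    exact div_le_one_of_le₀ (h v) (Real.sqrt_nonneg _)

lemma Matrix.PosSemidef.sqrt_eq_cfc (hA : A.PosSemidef) : hA.sqrt = cfc Real.sqrt A := by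
  rw [hA.1.cfc_eq, IsHermitian.cfc, Unitary.conjStarAlgAut_apply]
  rfl

lemma Matrix.PosSemidef.sqrt_mul_self (hA : A.PosSemidef) : hA.sqrt * hA.sqrt = A := by
  rw [hA.sqrt_eq_cfc, ← cfc_mul Real.sqrt Real.sqrt A]
  conv_rhs => rw [← cfc_id' ℝ A hA.1]
  refine cfc_congr fun x hx => Real.mul_self_sqrt ?_
  rw [hA.1.spectrum_real_eq_range_eigenvalues] at hx
  obtain ⟨i, rfl⟩ := hx
  exact hA.eigenvalues_nonneg i

lemma Matrix.PosSemidef.transpose_sqrt (hA : A.PosSemidef) : hA.sqrtᵀ = hA.sqrt := by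
  rw [hA.sqrt_eq_cfc, ← conjTranspose_eq_transpose_of_trivial]
  exact (IsSelfAdjoint.cfc (f := Real.sqrt) (a := A)).star_eq

lemma Matrix.PosSemidef.range_sqrt (hA : A.PosSemidef) :
    LinearMap.range hA.sqrt.mulVecLin = LinearMap.range A.mulVecLin := by
  have hle := LinearMap.range_comp_le_range hA.sqrt.mulVecLin hA.sqrt.mulVecLin
  rw [← mulVecLin_mul, hA.sqrt_mul_self] at hle
  have hrank := rank_transpose_mul_self hA.sqrt
  rw [hA.transpose_sqrt, hA.sqrt_mul_self] at hrank
  exact (Submodule.eq_of_le_of_finrank_eq hle hrank).symm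

lemma Matrix.PosSemidef.vnorm_eq_norm_sqrt_mulVec (hA : A.PosSemidef) (v : Fin n → ℝ) :
    vnorm A v = ‖WithLp.toLp 2 (hA.sqrt *ᵥ v)‖ := by
  have hquad := mulVec_dotProduct_mulVec hA.sqrt 1 v
  rw [one_mulVec, Matrix.mul_one, hA.transpose_sqrt, hA.sqrt_mul_self] at hquad
  rw [vnorm, EuclideanSpace.norm_eq, ← hquad]
  simp [dotProduct, sq]

lemma Matrix.PosSemidef.exists_vnorm_one_sub_mul_mulVec_le (hA : A.PosSemidef)
    (M : Matrix (Fin n) (Fin n) ℝ) :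
    ∃ C, ∀ v, vnorm A ((1 - M * A) *ᵥ v) ≤ C * vnorm A v := by
  set S := hA.sqrt
  refine ⟨‖toEuclideanCLM (n := Fin n) (𝕜 := ℝ) (1 - S * M * S)‖, fun v => ?_⟩
  have hS : S * (1 - M * (S * S)) = (1 - S * M * S) * S := by noncomm_ring
  rw [hA.sqrt_mul_self] at hS
  rw [hA.vnorm_eq_norm_sqrt_mulVec, hA.vnorm_eq_norm_sqrt_mulVec, mulVec_mulVec, hS,
    ← mulVec_mulVec, ← toEuclideanCLM_toLp]
  exact ContinuousLinearMap.le_opNorm _ _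

lemma Matrix.PosSemidef.vnorm_one_sub_mul_mulVec_le_iff (hA : A.PosSemidef)
    (M : Matrix (Fin n) (Fin n) ℝ) (v : Fin n → ℝ) :
    vnorm A ((1 - M * A) *ᵥ v) ≤ vnorm A v ↔
      0 ≤ (A *ᵥ v) ⬝ᵥ (M + Mᵀ - Mᵀ * A * M) *ᵥ (A *ᵥ v) := by
  rw [vnorm, vnorm, Real.sqrt_le_sqrt_iff (by simpa using hA.dotProduct_mulVec_nonneg v),
    dotProduct_mulVec_one_sub_mul_mulVec (isHermitian_iff_isSymm.mp hA.1).eq, sub_le_self_iff]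

lemma Matrix.PosSemidef.posSemidef_sqrt_mul_mul_sqrt_iff (hA : A.PosSemidef)
    {N : Matrix (Fin n) (Fin n) ℝ} (hN : Nᵀ = N) :
    (hA.sqrt * N * hA.sqrt).PosSemidef ↔ ∀ v, 0 ≤ (A *ᵥ v) ⬝ᵥ N *ᵥ (A *ᵥ v) := by
  set S := hA.sqrt
  have hquad (u : Fin n → ℝ) : star u ⬝ᵥ (S * N * S) *ᵥ u = (S *ᵥ u) ⬝ᵥ N *ᵥ (S *ᵥ u) := by
    rw [mulVec_dotProduct_mulVec, hA.transpose_sqrt, star_trivial]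
  have hsymm : (S * N * S).IsHermitian := by
    rw [isHermitian_iff_isSymm, IsSymm, transpose_mul, transpose_mul, hA.transpose_sqrt, hN,
      Matrix.mul_assoc]
  rw [posSemidef_iff_dotProduct_mulVec]
  simp only [hsymm, hquad, true_and]
  constructor
  · intro h v
    obtain ⟨u, hu⟩ : A *ᵥ v ∈ LinearMap.range S.mulVecLin := hA.range_sqrt ▸ ⟨v, rfl⟩
    rw [← hu]
    exact h u
  · intro h u
    obtain ⟨v, hv⟩ : S *ᵥ u ∈ LinearMap.range A.mulVecLin := hA.range_sqrt ▸ ⟨u, rfl⟩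
    rw [← hv]
    exact h v

end

theorem stmt1_general {n : ℕ} (A M : Matrix (Fin n) (Fin n) ℝ)
    (hA : A.PosSemidef) :
    matNorm A (1 - M * A) ≤ 1 ↔
      (hA.sqrt * (M + Mᵀ - Mᵀ * A * M) * hA.sqrt).PosSemidef := by
  have hN : (M + Mᵀ - Mᵀ * A * M)ᵀ = M + Mᵀ - Mᵀ * A * M := by
    rw [transpose_sub, transpose_add, transpose_mul, transpose_mul, transpose_transpose,
      (isHermitian_iff_isSymm.mp hA.1).eq, add_comm, Matrix.mul_assoc]
  rw [matNorm_le_one_iff (hA.exists_vnorm_one_sub_mul_mulVec_le M),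
    hA.posSemidef_sqrt_mul_mul_sqrt_iff hN]
  exact forall_congr' (hA.vnorm_one_sub_mul_mulVec_le_iff M)

theorem stmt1 {n : ℕ} (A M : Matrix (Fin n) (Fin n) ℝ)
    (hA : A.PosSemidef) (hA0 : A ≠ 0) :
    matNorm A (1 - M * A) ≤ 1 ↔
      (hA.sqrt * (M + Mᵀ - Mᵀ * A * M) * hA.sqrt).PosSemidef :=
  stmt1_general A M hA
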